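/- arXiv:0910.4800 — 2 statements merged into one kernel-verified Lean document; each statement's English description precedes it below -/
import Mathlib

section
/- Let 𝒜 = {a,b,c,d} and let ω^G be the Grigorchuk substitution sequence. Then for every x ∈ Z(ω^G,σ) and all positive integers m and p: if x(m) = x(m+p) = x(m+2p) = x(m+3p), then x(m+np) = x(m) for all n ≥ 1. -/
/-- The four-letter alphabet 𝒜 = {a,b,c,d}. -/
inductive A : Type
  | a | b | c | d
  deriving DecidableEq

instance : TopologicalSpace A := ⊥
instance : DiscreteTopology A := ⟨rfl⟩

/-- The one-sided shift on sequences.  Sequences are 0-indexed here: index `n`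
stands for position `n+1` of the paper's sequences `{1,2,3,…} → 𝒜`. -/
def shift {𝒜 : Type*} (x : ℕ → 𝒜) : ℕ → 𝒜 := fun n => x (n + 1)

/-- `Z(ω,σ)`: the closure of the forward shift-orbit of `ω`. -/
def orbitClosure {𝒜 : Type*} [TopologicalSpace 𝒜] (ω : ℕ → 𝒜) : Set (ℕ → 𝒜) :=
  closure {y | ∃ n : ℕ, shift^[n] ω = y}

/-- The Grigorchuk substitution sequence `ω^G` (0-indexed: `omegaG n` is the letter at
position `m = n+1`).  Writing `m = 2^k(2l+1)`: the letter is `a` if `k = 0`, and for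
`k ≥ 1` it is `d`, `c`, or `b` according as `k ≡ 0, 1, 2 (mod 3)`. -/
def omegaG : ℕ → A := fun n =>
  if padicValNat 2 (n + 1) = 0 then A.a
  else if padicValNat 2 (n + 1) % 3 = 0 then A.d
  else if padicValNat 2 (n + 1) % 3 = 1 then A.c
  else A.b


/-!
Only the 2-adic valuation `v` of a position matters: the letter at position `N` is `a` when
`v N = 0` and is otherwise determined by `v N mod 3`. For positions `N, N + p, N + 2p, N + 3p`
with equal valuations mod 3 one must have `v N < v p`: if `v p < v N`, then
`v (N + p) = v p` forces `v N ≥ v p + 3`, but then `v (N + 2p) = v p + 1`; if `v p = v N`, then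
`v (N + p) > v N` forces `v (N + p) ≥ v N + 3`, but then `v (N + 3p) = v (2p) = v N + 1`.
Once `v N < v p`, every `N + np` has the valuation of `N`, hence the letter of `N`.
The statement passes to the orbit closure since it involves only finitely many coordinates.
-/

lemma padicValNat_add_of_lt {p : ℕ} [Fact p.Prime] {x y : ℕ} (hx : x ≠ 0)
    (h : padicValNat p x < padicValNat p y) : padicValNat p (x + y) = padicValNat p x := by
  have hy : y ≠ 0 := by rintro rfl; simp at h
  have key := padicValRat.add_eq_of_lt (p := p) (q := x) (r := y) (by positivity)
    (by exact_mod_cast hx) (by exact_mod_cast hy) (by simpa [padicValRat.of_nat] using h)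
  rw [← Nat.cast_add, padicValRat.of_nat, padicValRat.of_nat] at key
  exact_mod_cast key

lemma padicValNat_two_lt_add_of_eq {x y : ℕ} (hx : x ≠ 0) (hy : y ≠ 0)
    (h : padicValNat 2 x = padicValNat 2 y) : padicValNat 2 x < padicValNat 2 (x + y) := by
  set v := padicValNat 2 x
  have odd_cofactor {z c : ℕ} (hz : z ≠ 0) (hv : padicValNat 2 z = v) (hzc : z = 2 ^ v * c) :
      ¬ 2 ∣ c := by
    rintro ⟨d, rfl⟩
    refine pow_succ_padicValNat_not_dvd (p := 2) hz ⟨d, ?_⟩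
    rw [hv, hzc, pow_succ]
    ring
  obtain ⟨a, ha⟩ : 2 ^ v ∣ x := pow_padicValNat_dvd
  obtain ⟨b, hb⟩ : 2 ^ v ∣ y := h ▸ pow_padicValNat_dvd
  have hab : 2 ∣ a + b := by
    have := odd_cofactor hx rfl ha
    have := odd_cofactor hy h.symm hb
    omega
  have hdvd : 2 ^ (v + 1) ∣ x + y := by
    rw [ha, hb, ← mul_add, pow_succ]
    exact mul_dvd_mul_left _ hab
  exact (padicValNat_dvd_iff_le (by omega)).mp hdvd

lemma padicValNat_two_mul {n : ℕ} (hn : n ≠ 0) : padicValNat 2 (2 * n) = padicValNat 2 n + 1 := by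
  rw [padicValNat.mul two_ne_zero hn, padicValNat_self, add_comm]

lemma padicValNat_add_mul_of_lt {ℓ : ℕ} [Fact ℓ.Prime] {N p n : ℕ} (hN : N ≠ 0) (hn : n ≠ 0)
    (h : padicValNat ℓ N < padicValNat ℓ p) : padicValNat ℓ (N + n * p) = padicValNat ℓ N := by
  have hp : p ≠ 0 := by rintro rfl; simp at h
  refine padicValNat_add_of_lt hN ?_
  rw [padicValNat.mul hn hp]
  omega

lemma padicValNat_two_lt_of_mod_three {N p : ℕ} (hN : N ≠ 0) (hp : p ≠ 0)
    (h1 : padicValNat 2 (N + p) % 3 = padicValNat 2 N % 3)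
    (h2 : padicValNat 2 (N + 2 * p) % 3 = padicValNat 2 N % 3)
    (h3 : padicValNat 2 (N + 3 * p) % 3 = padicValNat 2 N % 3) :
    padicValNat 2 N < padicValNat 2 p := by
  by_contra! hle
  have h2p := padicValNat_two_mul hp
  rcases hle.eq_or_lt with heq | hlt
  · have hgt := padicValNat_two_lt_add_of_eq hN hp heq.symm
    have h3' : padicValNat 2 (N + 3 * p) = padicValNat 2 (2 * p) := by
      rw [show N + 3 * p = 2 * p + (N + p) by ring]
      exact padicValNat_add_of_lt (by positivity) (by omega)
    omega
  · have h1' : padicValNat 2 (N + p) = padicValNat 2 p := by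
      rw [add_comm]
      exact padicValNat_add_of_lt hp hlt
    have h2' : padicValNat 2 (N + 2 * p) = padicValNat 2 (2 * p) := by
      rw [add_comm]
      exact padicValNat_add_of_lt (by positivity) (by omega)
    omega

lemma omegaG_eq_of_padicValNat_eq {i j : ℕ} (h : padicValNat 2 (i + 1) = padicValNat 2 (j + 1)) :
    omegaG i = omegaG j := by
  simp only [omegaG, h]

lemma padicValNat_mod_three_eq_of_omegaG_eq {i j : ℕ} (h : omegaG i = omegaG j) :
    padicValNat 2 (i + 1) % 3 = padicValNat 2 (j + 1) % 3 := by
  unfold omegaG at h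
  split_ifs at h <;> omega

lemma omegaG_add_mul_eq {m p : ℕ} (hp : p ≠ 0) (h1 : omegaG (m + p) = omegaG m)
    (h2 : omegaG (m + 2 * p) = omegaG m) (h3 : omegaG (m + 3 * p) = omegaG m) {n : ℕ}
    (hn : n ≠ 0) : omegaG (m + n * p) = omegaG m := by
  have hlt : padicValNat 2 (m + 1) < padicValNat 2 p := by
    apply padicValNat_two_lt_of_mod_three m.add_one_ne_zero hp <;> rw [add_right_comm]
    exacts [padicValNat_mod_three_eq_of_omegaG_eq h1, padicValNat_mod_three_eq_of_omegaG_eq h2,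
      padicValNat_mod_three_eq_of_omegaG_eq h3]
  apply omegaG_eq_of_padicValNat_eq
  rw [add_right_comm]
  exact padicValNat_add_mul_of_lt m.add_one_ne_zero hn hlt

lemma shift_iterate_apply {𝒜 : Type*} (x : ℕ → 𝒜) (k n : ℕ) : shift^[k] x n = x (n + k) := by
  induction k generalizing x with
  | zero => rfl
  | succ k ih => rw [Function.iterate_succ_apply, ih]; rfl

lemma exists_add_eq_of_mem_orbitClosure {𝒜 : Type*} [TopologicalSpace 𝒜] [DiscreteTopology 𝒜]
    {ω x : ℕ → 𝒜} (hx : x ∈ orbitClosure ω) (s : Finset ℕ) :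
    ∃ k, ∀ i ∈ s, ω (i + k) = x i := by
  have hU : IsOpen ((s : Set ℕ).pi fun i => {x i}) :=
    isOpen_set_pi s.finite_toSet fun i _ => isOpen_discrete _
  obtain ⟨y, hy, k, rfl⟩ := mem_closure_iff.mp hx _ hU (by simp [Set.mem_pi])
  exact ⟨k, fun i hi => by simpa [shift_iterate_apply] using hy i hi⟩

/-- For every `x ∈ Z(ω^G,σ)` and all positive `p` (and every position `m`): if
`x(m) = x(m+p) = x(m+2p) = x(m+3p)` then `x(m+np) = x(m)` for all `n ≥ 1`. -/
theorem stmt5 :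
    ∀ x ∈ orbitClosure omegaG, ∀ m p : ℕ, 0 < p →
      x (m + p) = x m → x (m + 2 * p) = x m → x (m + 3 * p) = x m →
      ∀ n : ℕ, 0 < n → x (m + n * p) = x m := by
  intro x hx m p hp h1 h2 h3 n hn
  obtain ⟨k, hk⟩ :=
    exists_add_eq_of_mem_orbitClosure hx {m, m + p, m + 2 * p, m + 3 * p, m + n * p}
  simp only [Finset.mem_insert, Finset.mem_singleton, forall_eq_or_imp, forall_eq] at hk
  obtain ⟨h0, h1', h2', h3', hn'⟩ := hk
  have key := omegaG_add_mul_eq (m := m + k) hp.ne' (by rw [add_right_comm, h1', h0, h1])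
    (by rw [add_right_comm, h2', h0, h2]) (by rw [add_right_comm, h3', h0, h3]) hn.ne'
  rwa [add_right_comm, hn', h0] at key
end

section
/- Let 𝒜 be a nonempty finite alphabet, let ω be a Toeplitz sequence over 𝒜, and let p ∈ EP(ω). Then there exists a continuous surjection f : Z(ω,σ) → ℤ/pℤ such that f(σx) = f(x) + 1 for all x ∈ Z(ω,σ); that is, the cyclic permutation of order p is a continuous factor of the subshift σ|_{Z(ω,σ)}, so EP(ω) ⊆ CF(σ|_{Z(ω,σ)}). -/
/-- A sequence is Toeplitz if every position is periodically repeated. -/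
def IsToeplitz {𝒜 : Type*} (x : ℕ → 𝒜) : Prop :=
  ∀ n : ℕ, ∃ p : ℕ, 0 < p ∧ ∀ k : ℕ, 0 < k → x (n + k * p) = x n

/-- `p ≥ 1` is an essential partial period of `x` if there is a position `m` with
`x(m+kp) = x(m)` for all `k ≥ 1`, while for every `1 ≤ p' < p` some `k ≥ 1` has
`x(m+kp') ≠ x(m)`. -/
def EP {𝒜 : Type*} (x : ℕ → 𝒜) : Set ℕ :=
  {p | 0 < p ∧ ∃ m : ℕ, (∀ k : ℕ, 0 < k → x (m + k * p) = x m) ∧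
    ∀ p' : ℕ, 0 < p' → p' < p → ∃ k : ℕ, 0 < k ∧ x (m + k * p') ≠ x m}

lemma continuous_shift {𝒜 : Type*} [TopologicalSpace 𝒜] :
    Continuous (shift : (ℕ → 𝒜) → (ℕ → 𝒜)) :=
  continuous_pi fun n => continuous_apply (n + 1)

lemma shift_mapsTo {𝒜 : Type*} [TopologicalSpace 𝒜] (ω : ℕ → 𝒜) :
    Set.MapsTo shift (orbitClosure ω) (orbitClosure ω) := by
  have h : Set.MapsTo (shift (𝒜 := 𝒜)) {y | ∃ n : ℕ, shift^[n] ω = y}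
      {y | ∃ n : ℕ, shift^[n] ω = y} := by
    rintro y ⟨n, rfl⟩
    exact ⟨n + 1, Function.iterate_succ_apply' shift n ω⟩
  exact h.closure continuous_shift

/-- The subshift `σ|_{Z(ω,σ)}`, as a self-map of the subspace `Z(ω,σ)`. -/
def shiftZ {𝒜 : Type*} [TopologicalSpace 𝒜] (ω : ℕ → 𝒜) :
    ↥(orbitClosure ω) → ↥(orbitClosure ω) :=
  Set.MapsTo.restrict shift _ _ (shift_mapsTo ω)

/-- `CF(T)`: the set of `n ≥ 1` such that the cyclic permutation of order `n` is a
continuous factor of `T`, i.e. there is a continuous surjection `f : X → ℤ/nℤ` with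
`f(Tx) = f(x) + 1`. -/
def CF {X : Type*} [TopologicalSpace X] (T : X → X) : Set ℕ :=
  {n | 0 < n ∧ ∃ f : X → ZMod n,
    Continuous f ∧ Function.Surjective f ∧ ∀ x, f (T x) = f x + 1}

/-! Send `x ∈ Z(ω,σ)` to `n mod p`, where `σⁿω` agrees with `x` on a long initial block. This is
well defined because long blocks of `ω` determine their position mod `p`: if arbitrarily long
blocks recurred with a shift `≡ e ≢ 0 (mod p)`, Toeplitz periodicity would propagate the constancy
of `ω` on the class of the essential position `m` to the classes `m + t e`, so that
`ω (m + k · e.val) = ω m` for all `k`, contradicting the essentiality of `p` since `e.val < p`. -/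

open PiNat Filter

section

variable {𝒜 : Type*}

lemma iterate_shift_apply (x : ℕ → 𝒜) (n i : ℕ) : shift^[n] x i = x (n + i) := by
  induction n generalizing x with
  | zero => simp
  | succ n ih =>
    rw [Function.iterate_succ_apply, ih]
    simp only [shift]
    congr 1
    omega

lemma shift_mem_cylinder {x y : ℕ → 𝒜} {l : ℕ} (h : y ∈ cylinder x (l + 1)) :
    shift y ∈ cylinder (shift x) l :=
  fun i hi => h (i + 1) (by omega)

namespace IsToeplitz

variable {ω : ℕ → 𝒜}

lemma exists_period_natCast_eq_zero (hT : IsToeplitz ω) (y : ℕ) {p : ℕ} (hp : 0 < p) :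
    ∃ P : ℕ, 0 < P ∧ (P : ZMod p) = 0 ∧ ∀ k, ω (y + k * P) = ω y := by
  obtain ⟨q, hq, hqy⟩ := hT y
  refine ⟨p * q, Nat.mul_pos hp hq, by simp, fun k => ?_⟩
  rcases k.eq_zero_or_pos with rfl | hk
  · simp
  · rw [← mul_assoc]
    exact hqy _ (Nat.mul_pos hk hp)

lemma apply_eq_of_natCast_eq (hT : IsToeplitz ω) {p m : ℕ} [NeZero p]
    (hm : ∀ k, 0 < k → ω (m + k * p) = ω m) {y : ℕ} (hy : (y : ZMod p) = m) : ω y = ω m := by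
  obtain ⟨P, hP, hPp, hPy⟩ := hT.exists_period_natCast_eq_zero y (NeZero.pos p)
  have hmz : m ≤ y + m * P := le_add_left (Nat.le_mul_of_pos_right m hP)
  have hmod : m ≡ y + m * P [MOD p] :=
    (ZMod.natCast_eq_natCast_iff _ _ _).1 (by push_cast; rw [hPp, hy]; ring)
  obtain ⟨k, hk⟩ := (Nat.modEq_iff_dvd' hmz).1 hmod
  rw [← hPy m, show y + m * P = m + k * p by rw [mul_comm k]; omega]
  rcases k.eq_zero_or_pos with rfl | hk0
  · simp
  · exact hm k hk0

lemma apply_eq_of_natCast_eq_add (hT : IsToeplitz ω) {p : ℕ} [NeZero p] {c e : ZMod p} {a : 𝒜}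
    (hc : ∀ y : ℕ, (y : ZMod p) = c → ω y = a)
    (he : ∀ L, ∃ n n' : ℕ, shift^[n] ω ∈ cylinder (shift^[n'] ω) L ∧ (n' : ZMod p) - n = e)
    {y : ℕ} (hy : (y : ZMod p) = c + e) : ω y = a := by
  obtain ⟨P, hP, hPp, hPy⟩ := hT.exists_period_natCast_eq_zero y (NeZero.pos p)
  obtain ⟨n, n', hnn', hn⟩ := he (y + P + 1)
  -- `y + k P` lies on the Toeplitz progression of `y` and inside the block starting at `n'`,
  -- so the recurrence carries it back to a point of the class `c`.
  set k := n' / P + 1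
  have hk : n' < k * P ∧ k * P ≤ n' + P := by
    have hkP : k * P = P * (n' / P) + P := by rw [add_mul, one_mul, mul_comm]
    have := Nat.div_add_mod n' P
    have := Nat.mod_lt n' hP
    omega
  have hi : y + k * P - n' < y + P + 1 := by omega
  have hpos : n' + (y + k * P - n') = y + k * P := by omega
  have hω : ω (n + (y + k * P - n')) = ω (n' + (y + k * P - n')) := by
    simpa only [iterate_shift_apply] using mem_cylinder_iff.1 hnn' _ hi
  have hcast : ((n' + (y + k * P - n') : ℕ) : ZMod p) = y := by
    rw [hpos]
    push_cast
    rw [hPp, mul_zero, add_zero]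
  rw [← hPy k, ← hpos, ← hω]
  apply hc
  push_cast at hcast ⊢
  linear_combination hcast + hy - hn

lemma eq_zero_of_forall_mem_cylinder (hT : IsToeplitz ω) {p : ℕ} (hp : p ∈ EP ω) {e : ZMod p}
    (he : ∀ L, ∃ n n' : ℕ, shift^[n] ω ∈ cylinder (shift^[n'] ω) L ∧ (n' : ZMod p) - n = e) :
    e = 0 := by
  obtain ⟨hp0, m, hm, hess⟩ := hp
  have : NeZero p := ⟨hp0.ne'⟩
  have hclass : ∀ t : ℕ, ∀ y : ℕ, (y : ZMod p) = m + t * e → ω y = ω m := by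
    intro t
    induction t with
    | zero => simpa using fun y => hT.apply_eq_of_natCast_eq hm (y := y)
    | succ t ih =>
      intro y hy
      exact hT.apply_eq_of_natCast_eq_add ih he (by rw [hy]; push_cast; ring)
  by_contra he0
  obtain ⟨k, -, hne⟩ := hess e.val (ZMod.val_pos.2 he0) (ZMod.val_lt e)
  exact hne (hclass k _ (by push_cast; rw [ZMod.natCast_zmod_val]))

lemma exists_natCast_eq_of_mem_cylinder (hT : IsToeplitz ω) {p : ℕ} (hp : p ∈ EP ω) :
    ∃ L, ∀ n n' : ℕ, shift^[n] ω ∈ cylinder (shift^[n'] ω) L → (n : ZMod p) = n' := by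
  have : NeZero p := ⟨hp.1.ne'⟩
  have h : ∀ e : ZMod p, ∀ᶠ L in atTop,
      ∀ n n' : ℕ, shift^[n] ω ∈ cylinder (shift^[n'] ω) L → (n' : ZMod p) - n = e → e = 0 := by
    intro e
    by_contra hfreq
    simp only [not_eventually, frequently_atTop, not_forall] at hfreq
    obtain ⟨_, -, _, _, -, -, he0⟩ := hfreq 0
    refine he0 (hT.eq_zero_of_forall_mem_cylinder hp fun L => ?_)
    obtain ⟨L', hLL', n, n', hnn', hn, -⟩ := hfreq L
    exact ⟨n, n', cylinder_anti _ hLL' hnn', hn⟩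
  obtain ⟨L, hL⟩ := (eventually_all.2 h).exists
  exact ⟨L, fun n n' hnn' => (sub_eq_zero.1 (hL _ n n' hnn' rfl)).symm⟩

end IsToeplitz

section Factor

variable [TopologicalSpace 𝒜] [DiscreteTopology 𝒜] {ω : ℕ → 𝒜}

lemma exists_iterate_mem_cylinder {x : ℕ → 𝒜} (hx : x ∈ orbitClosure ω) (l : ℕ) :
    ∃ n, shift^[n] ω ∈ cylinder x l := by
  obtain ⟨_, hy, n, rfl⟩ := mem_closure_iff.1 hx _ (isOpen_cylinder _ x l) (self_mem_cylinder x l)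
  exact ⟨n, hy⟩

lemma mem_CF_shiftZ_of_natCast_eq {p L : ℕ} (hp : 0 < p)
    (hL : ∀ n n' : ℕ, shift^[n] ω ∈ cylinder (shift^[n'] ω) L → (n : ZMod p) = n') :
    p ∈ CF (shiftZ ω) := by
  have : NeZero p := ⟨hp.ne'⟩
  have hcongr : ∀ {n n' : ℕ} {x : ℕ → 𝒜}, shift^[n] ω ∈ cylinder x L →
      shift^[n'] ω ∈ cylinder x L → (n : ZMod p) = n' := fun h h' =>
    hL _ _ (mem_cylinder_iff_eq.2 ((mem_cylinder_iff_eq.1 h).trans (mem_cylinder_iff_eq.1 h').symm))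
  choose N hN using fun x : orbitClosure ω => exists_iterate_mem_cylinder x.2 (L + 1)
  have hNL : ∀ x, shift^[N x] ω ∈ cylinder x.1 L := fun x => cylinder_anti _ L.le_succ (hN x)
  refine ⟨hp, fun x => N x, ?_, fun r => ?_, fun x => ?_⟩
  · refine IsLocallyConstant.continuous (IsLocallyConstant.iff_exists_open _ |>.2 fun x => ?_)
    refine ⟨Subtype.val ⁻¹' cylinder x.1 L, (isOpen_cylinder _ _ _).preimage continuous_subtype_val,
      self_mem_cylinder _ _, fun x' hx' => hcongr (hNL x') ?_⟩
    rw [mem_cylinder_iff_eq.1 hx']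
    exact hNL x
  · let y : orbitClosure ω := ⟨shift^[r.val] ω, subset_closure ⟨r.val, rfl⟩⟩
    exact ⟨y, (hcongr (hNL y) (self_mem_cylinder _ _)).trans (ZMod.natCast_zmod_val r)⟩
  · have h := shift_mem_cylinder (hN x)
    rw [← Function.iterate_succ_apply' shift] at h
    simpa using hcongr (hNL (shiftZ ω x)) h

end Factor

end

theorem stmt13_general {𝒜 : Type*} [TopologicalSpace 𝒜] [DiscreteTopology 𝒜]
    (ω : ℕ → 𝒜) (hT : IsToeplitz ω) (p : ℕ) (hp : p ∈ EP ω) :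
    p ∈ CF (shiftZ ω) := by
  obtain ⟨L, hL⟩ := hT.exists_natCast_eq_of_mem_cylinder hp
  exact mem_CF_shiftZ_of_natCast_eq hp.1 hL

/-- Every essential partial period `p` of a Toeplitz sequence `ω` gives a cyclic
permutation of order `p` as a continuous factor of the subshift `σ|_{Z(ω,σ)}`;
that is, `EP(ω) ⊆ CF(σ|_{Z(ω,σ)})`. -/
theorem stmt13 {𝒜 : Type*} [Fintype 𝒜] [Nonempty 𝒜] [TopologicalSpace 𝒜] [DiscreteTopology 𝒜]
    (ω : ℕ → 𝒜) (hT : IsToeplitz ω) (p : ℕ) (hp : p ∈ EP ω) :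
    p ∈ CF (shiftZ ω) :=
  stmt13_general ω hT p hp
end
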